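/- If Q_Δ ∈ ℝ^{M×M} is lower triangular and M ∈ ℝ^{N×N} is symmetric positive definite, and f is Lipschitz with constant L satisfying Δt·‖Q_Δ‖·L < λ_min(M), then the SDC preconditioner map u ↦ (I_M ⊗ M)u − Δt(Q_Δ ⊗ I_N)F(u) is injective. -/

import Mathlib

open scoped RealInnerProductSpace

/-!
Since `QΔ` is lower triangular, the preconditioner is inverted by forward substitution: if two
arguments agree at the nodes before `m`, their values `x, y` at node `m` satisfy
`M (x - y) = Δt q_mm (f x - f y)`. Pairing with `x - y` gives
`λ ‖x - y‖² ≤ Δt |q_mm| L ‖x - y‖²`, and `|q_mm| ≤ ‖QΔ‖` makes the factor `Δt |q_mm| L < λ`,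
so `x = y`.
-/
theorem Matrix.abs_apply_le_of_norm_mulVec_le {ι : Type*} [Fintype ι] [DecidableEq ι]
    (A : Matrix ι ι ℝ) {c : ℝ}
    (hA : ∀ v : EuclideanSpace ℝ ι, ‖(WithLp.toLp 2 (A.mulVec v) : EuclideanSpace ℝ ι)‖ ≤ c * ‖v‖)
    (i j : ι) : |A i j| ≤ c := by
  have hentry : A i j = ⟪EuclideanSpace.single i 1,
      (WithLp.toLp 2 (A.mulVec (EuclideanSpace.single j (1 : ℝ))) : EuclideanSpace ℝ ι)⟫ := by
    simp [EuclideanSpace.inner_single_left]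
  calc |A i j| ≤ ‖(EuclideanSpace.single i 1 : EuclideanSpace ℝ ι)‖ *
        ‖(WithLp.toLp 2 (A.mulVec (EuclideanSpace.single j (1 : ℝ))) : EuclideanSpace ℝ ι)‖ :=
        hentry ▸ abs_real_inner_le_norm _ _
    _ ≤ c := by simpa using hA (EuclideanSpace.single j 1)

theorem eq_zero_of_mul_sq_norm_le_inner_smul {E : Type*} [NormedAddCommGroup E]
    [InnerProductSpace ℝ E] {w d : E} {c K lam : ℝ} (hd : ‖d‖ ≤ K * ‖w‖)
    (hlt : |c| * K < lam) (h : lam * ‖w‖ ^ 2 ≤ ⟪w, c • d⟫) : w = 0 := by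
  have hinner : ⟪w, c • d⟫ ≤ |c| * K * ‖w‖ ^ 2 :=
    calc ⟪w, c • d⟫ = c * ⟪w, d⟫ := real_inner_smul_right _ _ _
      _ ≤ |c| * (‖w‖ * ‖d‖) :=
        (le_abs_self _).trans ((abs_mul _ _).trans_le
          (mul_le_mul_of_nonneg_left (abs_real_inner_le_norm _ _) (abs_nonneg c)))
      _ ≤ |c| * (‖w‖ * (K * ‖w‖)) := by gcongr
      _ = |c| * K * ‖w‖ ^ 2 := by ring
  have : ‖w‖ ^ 2 ≤ 0 := by nlinarith [sq_nonneg ‖w‖]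
  exact norm_eq_zero.mp (pow_eq_zero_iff two_ne_zero |>.mp (le_antisymm this (sq_nonneg _)))

theorem LinearMap.eq_of_sub_eq_smul_sub_of_coercive {E : Type*} [NormedAddCommGroup E]
    [InnerProductSpace ℝ E] (A : E →ₗ[ℝ] E) {lam : ℝ}
    (hA : ∀ w, lam * ‖w‖ ^ 2 ≤ ⟪w, A w⟫) {f : E → E} {K : NNReal} (hf : LipschitzWith K f)
    {c : ℝ} (hc : |c| * K < lam) {x y : E} (h : A x - A y = c • (f x - f y)) : x = y := by
  refine sub_eq_zero.mp (eq_zero_of_mul_sq_norm_le_inner_smul (d := f x - f y) ?_ hc ?_)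
  · simpa only [dist_eq_norm] using hf.dist_le_mul x y
  · simpa only [map_sub, h] using hA (x - y)

theorem Matrix.injective_sub_sum_smul_of_lowerTriangular {ι R X Y : Type*} [Fintype ι]
    [LinearOrder ι] [Ring R] [AddCommGroup Y] [Module R Y] (Q : Matrix ι ι R)
    (hQ : ∀ i j, i < j → Q i j = 0) (A g : X → Y)
    (hdiag : ∀ i x y, A x - A y = Q i i • (g x - g y) → x = y) :
    Function.Injective (fun (u : ι → X) i => A (u i) - ∑ j, Q i j • g (u j)) := by
  intro u v huv
  funext i
  induction i using WellFoundedLT.induction with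
  | _ i ih =>
    refine hdiag i _ _ ?_
    have hrow : A (u i) - A (v i) = ∑ j, Q i j • g (u j) - ∑ j, Q i j • g (v j) :=
      sub_eq_sub_iff_sub_eq_sub.mp (congrFun huv i)
    rw [hrow, ← Finset.sum_sub_distrib, Finset.sum_eq_single i, smul_sub]
    · intro j _ hji
      rcases hji.lt_or_gt with hlt | hgt
      · rw [ih j hlt, sub_self]
      · rw [hQ i j hgt, zero_smul, zero_smul, sub_self]
    · simp

theorem sdc_preconditioner_injective_general {M N : ℕ}
    (QΔ : Matrix (Fin M) (Fin M) ℝ) (hQΔlt : ∀ i j : Fin M, i < j → QΔ i j = 0)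
    (Mmat : Matrix (Fin N) (Fin N) ℝ)
    (lam : ℝ)
    (hmin : ∀ v : EuclideanSpace ℝ (Fin N), lam * ‖v‖ ^ 2 ≤ ⟪v, show EuclideanSpace ℝ (Fin N) from WithLp.toLp 2 (Mmat.mulVec v)⟫)
    (f : EuclideanSpace ℝ (Fin N) → EuclideanSpace ℝ (Fin N))
    (L : ℝ) (hL : 0 ≤ L) (hf : LipschitzWith (Real.toNNReal L) f)
    (nQ : ℝ)
    (hQnorm : ∀ v : EuclideanSpace ℝ (Fin M), ‖show EuclideanSpace ℝ (Fin M) from WithLp.toLp 2 (QΔ.mulVec v)‖ ≤ nQ * ‖v‖)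
    (Δt : ℝ) (hΔt : 0 ≤ Δt) (hcond : Δt * nQ * L < lam) :
    Function.Injective (fun u : Fin M → EuclideanSpace ℝ (Fin N) =>
      fun m => (show EuclideanSpace ℝ (Fin N) from WithLp.toLp 2 (Mmat.mulVec (u m))) - Δt • ∑ j, QΔ m j • f (u j)) := by
  have hcontract : ∀ m, |(Δt • QΔ) m m| * Real.toNNReal L < lam := fun m =>
    calc |(Δt • QΔ) m m| * Real.toNNReal L = Δt * |QΔ m m| * L := by
          rw [Matrix.smul_apply, smul_eq_mul, abs_mul, abs_of_nonneg hΔt, Real.coe_toNNReal _ hL]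
      _ ≤ Δt * nQ * L := by gcongr; exact QΔ.abs_apply_le_of_norm_mulVec_le hQnorm m m
      _ < lam := hcond
  have hdiag : ∀ m x y, Matrix.toLpLin 2 2 Mmat x - Matrix.toLpLin 2 2 Mmat y =
      (Δt • QΔ) m m • (f x - f y) → x = y := fun m _ _ =>
    (Matrix.toLpLin 2 2 Mmat).eq_of_sub_eq_smul_sub_of_coercive hmin hf (hcontract m)
  convert (Δt • QΔ).injective_sub_sum_smul_of_lowerTriangular
    (fun i j hij => by rw [Matrix.smul_apply, hQΔlt i j hij, smul_zero]) _ f hdiag using 3 with u m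
  simp only [Finset.smul_sum, Matrix.smul_apply, smul_smul, smul_eq_mul, Matrix.toLpLin_apply]

/-- If `QΔ` is lower triangular, `Mmat` is symmetric positive definite with
smallest eigenvalue (Rayleigh) bound `lam`, `f` is Lipschitz with constant `L`,
and `Δt * ‖QΔ‖ * L < lam` (with `nQ` the operator 2-norm bound of `QΔ`), then
the SDC preconditioner map is injective. -/
theorem sdc_preconditioner_injective {M N : ℕ}
    (QΔ : Matrix (Fin M) (Fin M) ℝ) (hQΔlt : ∀ i j : Fin M, i < j → QΔ i j = 0)
    (Mmat : Matrix (Fin N) (Fin N) ℝ) (hMpd : Mmat.PosDef)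
    (lam : ℝ) (hlam : 0 < lam)
    (hmin : ∀ v : EuclideanSpace ℝ (Fin N), lam * ‖v‖ ^ 2 ≤ ⟪v, show EuclideanSpace ℝ (Fin N) from WithLp.toLp 2 (Mmat.mulVec v)⟫)
    (f : EuclideanSpace ℝ (Fin N) → EuclideanSpace ℝ (Fin N))
    (L : ℝ) (hL : 0 ≤ L) (hf : LipschitzWith (Real.toNNReal L) f)
    (nQ : ℝ) (hnQ : 0 ≤ nQ)
    (hQnorm : ∀ v : EuclideanSpace ℝ (Fin M), ‖show EuclideanSpace ℝ (Fin M) from WithLp.toLp 2 (QΔ.mulVec v)‖ ≤ nQ * ‖v‖)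
    (Δt : ℝ) (hΔt : 0 ≤ Δt) (hcond : Δt * nQ * L < lam) :
    Function.Injective (fun u : Fin M → EuclideanSpace ℝ (Fin N) =>
      fun m => (show EuclideanSpace ℝ (Fin N) from WithLp.toLp 2 (Mmat.mulVec (u m))) - Δt • ∑ j, QΔ m j • f (u j)) :=
  sdc_preconditioner_injective_general QΔ hQΔlt Mmat lam hmin f L hL hf nQ hQnorm Δt hΔt hcond
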